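/- (Braid Vandermonde identity, base case.) For all integers a, m, n ≥ 0: Ш_{m+n−a,a} = Σ_{b,c ≥ 0, b+c=a} Ш_{m−b,b} · Ш_{n−c,c}^{↑m} · β_{m−b,c}^{↑b} in 𝕜B_∞ (summands with b > m or c > n vanish). -/

import Mathlib

/-! The left side `Ш_{m+n-a,a}` and the right side, viewed as functions of `(a, n)`, satisfy the
same Pascal recursion `f(a+1, n+1) = f(a+1, n) + f(a, n) · β_{m+n-a,1}^{↑a}` with the same
boundary values at `a = 0` and at `n = 0`. For the right side this comes from expanding
`Ш_{n+1-c,c}` by its own recursion in each summand and moving the new crossing across the block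
braid: `β_{P,1}^{↑(k+c)} β_{k,c+1} = β_{k,c} β_{k+P,1}^{↑c}`. -/

namespace BraidPaper

/-- Relations of the infinite Artin braid group `B_∞`.  The generator with index `n : ℕ`
represents the Artin generator `σ_{n+1}` (so generators are `σ_1, σ_2, …`). -/
def BraidRels : Set (FreeGroup ℕ) :=
  {r | (∃ i : ℕ, r = .of i * .of (i + 1) * .of i * (.of (i + 1) * .of i * .of (i + 1))⁻¹) ∨
       (∃ i j : ℕ, i + 2 ≤ j ∧ r = .of i * .of j * (.of j * .of i)⁻¹)}

/-- The infinite Artin braid group `B_∞`, presented by generators `σ_1, σ_2, …` and the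
braid and far-commutativity relations. -/
abbrev BInf : Type := PresentedGroup BraidRels

/-- The Artin generator `σ i` of `B_∞` (meaningful for `i ≥ 1`). -/
def σ (i : ℕ) : BInf := PresentedGroup.of (i - 1)

lemma rel_eq_one {r : FreeGroup ℕ} (hr : r ∈ BraidRels) : PresentedGroup.mk BraidRels r = 1 := by
  have : r ∈ Subgroup.normalClosure BraidRels := Subgroup.subset_normalClosure hr
  exact (QuotientGroup.eq_one_iff r).mpr this

lemma gen_braid (i : ℕ) :
    (PresentedGroup.of i : BInf) * .of (i + 1) * .of i = .of (i + 1) * .of i * .of (i + 1) := by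
  have h := rel_eq_one (Or.inl ⟨i, rfl⟩)
  rw [map_mul, map_mul, map_mul, map_inv, map_mul, map_mul, mul_inv_eq_one] at h
  exact h

lemma gen_comm {i j : ℕ} (hij : i + 2 ≤ j) :
    (PresentedGroup.of i : BInf) * .of j = .of j * .of i := by
  have h := rel_eq_one (Or.inr ⟨i, j, hij, rfl⟩)
  rw [map_mul, map_mul, map_inv, map_mul, mul_inv_eq_one] at h
  exact h

/-- The shift endomorphism `↑ℓ : B_∞ → B_∞`, `σ_i ↦ σ_{i+ℓ}`. -/
def shift (l : ℕ) : BInf →* BInf :=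
  PresentedGroup.toGroup (f := fun n => (PresentedGroup.of (n + l) : BInf)) (by
    rintro r (⟨i, rfl⟩ | ⟨i, j, hij, rfl⟩) <;>
      simp only [map_mul, map_inv, FreeGroup.lift_apply_of, mul_inv_eq_one]
    · have h1 : i + 1 + l = i + l + 1 := by omega
      rw [h1]; exact gen_braid (i + l)
    · exact gen_comm (by omega : (i + l) + 2 ≤ j + l))

/-- The ascending product `σ_i σ_{i+1} ⋯ σ_{i+l-1}` (of `l` factors). -/
def asc (i l : ℕ) : BInf := ((List.range l).map fun t => σ (i + t)).prod

/-- The descending product `σ_i σ_{i-1} ⋯ σ_{i-k+1}` (of `k` factors). -/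
def desc (i k : ℕ) : BInf := ((List.range k).map fun t => σ (i - t)).prod

/-- The block transposition braid
`β_{k,l} = (σ_k σ_{k+1} ⋯ σ_{k+l-1})(σ_{k-1} σ_k ⋯ σ_{k+l-2}) ⋯ (σ_1 σ_2 ⋯ σ_l)`,
with `β_{k,0} = β_{0,l} = 1`. -/
def β (k l : ℕ) : BInf := ((List.range k).map fun r => asc (k - r) l).prod

/-- The positive (Garside) lift `ω_a = β_{1,1} β_{2,1} ⋯ β_{a-1,1}` of the longest element of
the symmetric group `S_a`, with `ω_0 = ω_1 = 1`. -/
def ω (a : ℕ) : BInf := ((List.range (a - 1)).map fun t => β (t + 1) 1).prod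

/-- The copy of the braid group `B_n` inside `B_∞`: the subgroup generated by
`σ_1, …, σ_{n-1}`. -/
def BSub (n : ℕ) : Subgroup BInf := Subgroup.closure {g | ∃ i, 1 ≤ i ∧ i < n ∧ g = σ i}


variable (𝕜 : Type) [CommRing 𝕜]

/-- The canonical embedding of `B_∞` into its group algebra `𝕜B_∞`. -/
noncomputable def ι (g : BInf) : MonoidAlgebra 𝕜 BInf := MonoidAlgebra.of 𝕜 BInf g

/-- The shift `↑ℓ` extended (as an algebra homomorphism) to the group algebra `𝕜B_∞`. -/
noncomputable def shiftA (l : ℕ) : MonoidAlgebra 𝕜 BInf →ₐ[𝕜] MonoidAlgebra 𝕜 BInf :=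
  MonoidAlgebra.mapDomainAlgHom 𝕜 𝕜 (shift l)

/-- The braid shuffle elements `Ш_{m,n} ∈ 𝕜B_∞` (for natural `m, n`), determined by
`Ш_{0,n} = Ш_{m,0} = 1` and the Pascal-type recursion
`Ш_{m,n} = Ш_{m-1,n} + Ш_{m,n-1} β_{m,1}^{↑(n-1)}`. -/
noncomputable def Sh : ℕ → ℕ → MonoidAlgebra 𝕜 BInf
  | 0, _ => 1
  | _ + 1, 0 => 1
  | m + 1, n + 1 => Sh m (n + 1) + Sh (m + 1) n * ι 𝕜 (shift n (β (m + 1) 1))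
  termination_by m n => (m, n)

/-- The braid shuffle elements `Ш_{m,n} ∈ 𝕜B_∞` for integer indices: `Ш_{m,n} = 0` whenever
`m < 0` or `n < 0`. -/
noncomputable def ShZ (m n : ℤ) : MonoidAlgebra 𝕜 BInf :=
  if 0 ≤ m ∧ 0 ≤ n then Sh 𝕜 m.toNat n.toNat else 0

/-- The braid Pochhammer symbol
`P_{k,n}(x,y) = (x - β_{k,1} y)(x - β_{k+1,1} y) ⋯ (x - β_{k+n-1,1} y) ∈ 𝕜B_∞`. -/
noncomputable def Poch (k n : ℕ) (x y : 𝕜) : MonoidAlgebra 𝕜 BInf :=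
  ((List.range n).map fun t =>
    algebraMap 𝕜 (MonoidAlgebra 𝕜 BInf) x - algebraMap 𝕜 (MonoidAlgebra 𝕜 BInf) y * ι 𝕜 (β (k + t) 1)).prod

theorem eq_of_pascal_recursion {R : Type*} {f g : ℕ → ℕ → R} (F : ℕ → ℕ → R → R → R)
    (h_left : ∀ n, f 0 n = g 0 n) (h_right : ∀ a, f a 0 = g a 0)
    (hf : ∀ a n, f (a + 1) (n + 1) = F a n (f (a + 1) n) (f a n))
    (hg : ∀ a n, g (a + 1) (n + 1) = F a n (g (a + 1) n) (g a n)) : f = g := by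
  funext a n
  induction n generalizing a with
  | zero => exact h_right a
  | succ n ihn =>
    cases a with
    | zero => exact h_left _
    | succ a => rw [hf, hg, ihn, ihn]

section Braids

lemma shift_of (l n : ℕ) : shift l (PresentedGroup.of n) = PresentedGroup.of (n + l) := by
  simp [shift]

lemma shift_σ (l : ℕ) {i : ℕ} (hi : 1 ≤ i) : shift l (σ i) = σ (i + l) := by
  rw [σ, σ, shift_of]
  congr 1
  omega

lemma shift_shift (a b : ℕ) (x : BInf) : shift a (shift b x) = shift (b + a) x := by
  have : (shift a).comp (shift b) = shift (b + a) := by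
    ext n
    simp [shift_of, add_assoc]
  exact DFunLike.congr_fun this x

lemma commute_σ_σ {i j : ℕ} (hi : 1 ≤ i) (h : i + 2 ≤ j) : Commute (σ i) (σ j) := by
  simpa [σ, Commute, SemiconjBy] using gen_comm (i := i - 1) (j := j - 1) (by omega)

lemma asc_succ (i l : ℕ) : asc i (l + 1) = asc i l * σ (i + l) := by
  simp [asc, List.range_succ]

lemma β_zero_right (k : ℕ) : β k 0 = 1 := by
  simp [β, asc]

lemma β_succ (k l : ℕ) : β (k + 1) l = asc (k + 1) l * β k l := by
  simp only [β, List.range_succ_eq_map, List.map_cons, List.prod_cons, List.map_map, Nat.sub_zero]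
  congr 2
  exact List.map_congr_left fun r _ => by simp

lemma β_succ_one (k : ℕ) : β (k + 1) 1 = σ (k + 1) * β k 1 := by
  rw [β_succ, asc, List.range_one, List.map_singleton, List.prod_singleton, add_zero]

lemma commute_σ_asc {j p l : ℕ} (hp : 1 ≤ p) (h : p + l + 1 ≤ j) : Commute (σ j) (asc p l) := by
  induction l with
  | zero => exact Commute.one_right _
  | succ l ih =>
    rw [asc_succ]
    exact (ih (by omega)).mul_right (commute_σ_σ (by omega) (by omega)).symm

lemma commute_σ_β {j k l : ℕ} (h : k + l + 1 ≤ j) : Commute (σ j) (β k l) := by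
  induction k with
  | zero => exact Commute.one_right _
  | succ k ih =>
    rw [β_succ]
    exact (commute_σ_asc (by omega) (by omega)).mul_right (ih (by omega))

lemma commute_shift_β_one_β (P k l : ℕ) : Commute (shift (k + l) (β P 1)) (β k l) := by
  induction P with
  | zero => simp [β]
  | succ P ih =>
    rw [β_succ_one, map_mul, shift_σ _ (by omega)]
    exact (commute_σ_β (by omega)).mul_left ih

lemma β_add_one_eq_shift_mul (k P : ℕ) : β (k + P) 1 = shift k (β P 1) * β k 1 := by
  induction P with
  | zero => simp [β]
  | succ P ih =>
    rw [← add_assoc, β_succ_one, ih, β_succ_one, map_mul, shift_σ _ (by omega), mul_assoc,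
      show P + 1 + k = k + P + 1 by omega]

lemma β_succ_right (k l : ℕ) : β k (l + 1) = β k l * shift l (β k 1) := by
  induction k with
  | zero => simp [β]
  | succ k ih =>
    rw [β_succ k (l + 1), ih, asc_succ, β_succ k l, β_succ_one, map_mul, shift_σ _ (by omega)]
    simp only [mul_assoc]
    rw [← mul_assoc (β k l), ← (commute_σ_β (by omega)).eq, mul_assoc]

lemma shift_β_one_mul_β_succ_right (k P l : ℕ) :
    shift (k + l) (β P 1) * β k (l + 1) = β k l * shift l (β (k + P) 1) := by
  rw [β_succ_right k l, ← mul_assoc, (commute_shift_β_one_β P k l).eq, mul_assoc,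
    β_add_one_eq_shift_mul, map_mul, shift_shift]

end Braids

section GroupAlgebra

lemma ι_one : ι 𝕜 1 = 1 := map_one (MonoidAlgebra.of 𝕜 BInf)

lemma ι_mul (g h : BInf) : ι 𝕜 (g * h) = ι 𝕜 g * ι 𝕜 h := map_mul (MonoidAlgebra.of 𝕜 BInf) g h

lemma shiftA_ι (l : ℕ) (g : BInf) : shiftA 𝕜 l (ι 𝕜 g) = ι 𝕜 (shift l g) := by
  simp [shiftA, ι, MonoidAlgebra.mapDomainAlgHom_apply]

lemma Sh_zero_right (m : ℕ) : Sh 𝕜 m 0 = 1 := by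
  cases m <;> rw [Sh]

lemma ShZ_natCast (p q : ℕ) : ShZ 𝕜 p q = Sh 𝕜 p q := by
  simp [ShZ]

lemma ShZ_of_neg {p : ℤ} (h : p < 0) (q : ℤ) : ShZ 𝕜 p q = 0 := by
  rw [ShZ, if_neg (by omega)]

lemma ShZ_zero_right {p : ℤ} (h : 0 ≤ p) : ShZ 𝕜 p 0 = 1 := by
  lift p to ℕ using h
  exact_mod_cast (ShZ_natCast 𝕜 p 0).trans (Sh_zero_right 𝕜 p)

lemma ShZ_succ_right (p : ℤ) (a : ℕ) :
    ShZ 𝕜 p ↑(a + 1) = ShZ 𝕜 (p - 1) ↑(a + 1) + ShZ 𝕜 p a * ι 𝕜 (shift a (β p.toNat 1)) := by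
  rcases lt_trichotomy p 0 with hp | rfl | hp
  · simp [ShZ_of_neg 𝕜 hp, ShZ_of_neg 𝕜 (by omega : p - 1 < 0)]
  · simp [ShZ, Sh, β, ι_one]
    omega
  · lift p to ℕ using hp.le
    obtain ⟨q, rfl⟩ := Nat.exists_eq_add_one_of_ne_zero (by omega : p ≠ 0)
    rw [Nat.cast_succ, add_sub_cancel_right, ← Nat.cast_succ, ShZ_natCast, ShZ_natCast,
      ShZ_natCast, Int.toNat_natCast, Sh]

end GroupAlgebra

noncomputable def vandermondeTerm (m n b c : ℕ) : MonoidAlgebra 𝕜 BInf :=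
  ShZ 𝕜 ((m : ℤ) - b) b * shiftA 𝕜 m (ShZ 𝕜 ((n : ℤ) - c) c) * ι 𝕜 (shift b (β (m - b) c))

noncomputable def vandermondeSum (m n a : ℕ) : MonoidAlgebra 𝕜 BInf :=
  ∑ b ∈ Finset.range (a + 1), vandermondeTerm 𝕜 m n b (a - b)

lemma vandermondeTerm_zero_right (m n b : ℕ) :
    vandermondeTerm 𝕜 m n b 0 = ShZ 𝕜 ((m : ℤ) - b) b := by
  simp [vandermondeTerm, ShZ_zero_right, β_zero_right, ι_one]

lemma vandermondeTerm_zero_succ (m b c : ℕ) : vandermondeTerm 𝕜 m 0 b (c + 1) = 0 := by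
  rw [vandermondeTerm, ShZ_of_neg 𝕜 (by omega : ((0 : ℕ) : ℤ) - ((c + 1 : ℕ) : ℤ) < 0)]
  simp

lemma vandermondeTerm_succ_succ (m n b c : ℕ) :
    vandermondeTerm 𝕜 m (n + 1) b (c + 1) =
      vandermondeTerm 𝕜 m n b (c + 1) +
        vandermondeTerm 𝕜 m n b c * ι 𝕜 (shift (b + c) (β (m + n - (b + c)) 1)) := by
  rcases lt_or_ge m b with hmb | hbm
  · simp [vandermondeTerm, ShZ_of_neg 𝕜 (by omega : (m : ℤ) - b < 0)]
  rcases lt_or_ge n c with hnc | hcn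
  · simp only [vandermondeTerm]
    rw [ShZ_of_neg 𝕜 (by omega : (n : ℤ) - c < 0),
      ShZ_of_neg 𝕜 (by omega : (n : ℤ) - ((c + 1 : ℕ) : ℤ) < 0),
      ShZ_of_neg 𝕜 (by omega : ((n + 1 : ℕ) : ℤ) - ((c + 1 : ℕ) : ℤ) < 0)]
    simp
  have hslide := congrArg (shift b) (shift_β_one_mul_β_succ_right (m - b) (n - c) c)
  rw [map_mul, map_mul, shift_shift, shift_shift, show m - b + c + b = c + m by omega,
    show m - b + (n - c) = m + n - (b + c) by omega, add_comm c b] at hslide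
  have hrec := ShZ_succ_right 𝕜 ((n : ℤ) - c) c
  rw [show (n : ℤ) - c - 1 = n - ↑(c + 1) by push_cast; ring,
    show ((n : ℤ) - c).toNat = n - c by omega] at hrec
  rw [vandermondeTerm, vandermondeTerm, vandermondeTerm,
    show ((n + 1 : ℕ) : ℤ) - ↑(c + 1) = n - c by push_cast; ring, hrec, map_add, mul_add, add_mul,
    map_mul, shiftA_ι, shift_shift]
  simp only [mul_assoc, ← ι_mul, hslide]

lemma vandermondeSum_zero_right (m n : ℕ) : vandermondeSum 𝕜 m n 0 = 1 := by
  simp [vandermondeSum, vandermondeTerm_zero_right, ShZ_zero_right]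

lemma vandermondeSum_zero_left (m a : ℕ) : vandermondeSum 𝕜 m 0 a = ShZ 𝕜 ((m : ℤ) - a) a := by
  rw [vandermondeSum, Finset.sum_range_succ, Nat.sub_self, vandermondeTerm_zero_right,
    add_eq_right]
  refine Finset.sum_eq_zero fun b hb => ?_
  obtain ⟨c, hc⟩ := Nat.exists_eq_add_one_of_ne_zero (by simp at hb; omega : a - b ≠ 0)
  rw [hc, vandermondeTerm_zero_succ]

lemma vandermondeSum_succ_succ (m n a : ℕ) :
    vandermondeSum 𝕜 m (n + 1) (a + 1) =
      vandermondeSum 𝕜 m n (a + 1) +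
        vandermondeSum 𝕜 m n a * ι 𝕜 (shift a (β (m + n - a) 1)) := by
  rw [vandermondeSum, vandermondeSum, vandermondeSum, Finset.sum_range_succ, Nat.sub_self,
    vandermondeTerm_zero_right, Finset.sum_range_succ _ (a + 1), Nat.sub_self,
    vandermondeTerm_zero_right, Finset.sum_mul, add_right_comm, ← Finset.sum_add_distrib]
  congr 1
  refine Finset.sum_congr rfl fun b hb => ?_
  have hba : b ≤ a := Nat.lt_succ_iff.mp (Finset.mem_range.mp hb)
  rw [Nat.sub_add_comm hba, vandermondeTerm_succ_succ, Nat.add_sub_cancel' hba]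

/-- braid Vandermonde identity, base case `k = 0`: for all `a, m, n ≥ 0`,
`Ш_{m+n-a,a} = Σ_{b+c=a} Ш_{m-b,b} Ш_{n-c,c}^{↑m} β_{m-b,c}^{↑b}`
(summands with `b > m` or `c > n` vanish). -/
theorem braid_vandermonde_base (a m n : ℕ) :
    ShZ 𝕜 ((m : ℤ) + n - a) a =
      ∑ b ∈ Finset.range (a + 1),
        ShZ 𝕜 ((m : ℤ) - b) b *
          shiftA 𝕜 m (ShZ 𝕜 ((n : ℤ) - ((a - b : ℕ) : ℤ)) ((a - b : ℕ) : ℤ)) *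
          ι 𝕜 (shift b (β (m - b) (a - b))) := by
  have lhs_succ_succ (a n : ℕ) :
      ShZ 𝕜 ((m : ℤ) + ↑(n + 1) - ↑(a + 1)) ↑(a + 1) =
        ShZ 𝕜 ((m : ℤ) + n - ↑(a + 1)) ↑(a + 1) +
          ShZ 𝕜 ((m : ℤ) + n - a) a * ι 𝕜 (shift a (β (m + n - a) 1)) := by
    rw [show (m : ℤ) + ↑(n + 1) - ↑(a + 1) = m + n - a by push_cast; ring,
      ShZ_succ_right, show (m : ℤ) + n - a - 1 = m + n - ↑(a + 1) by push_cast; ring,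
      show ((m : ℤ) + n - a).toNat = m + n - a by omega]
  have hpascal := eq_of_pascal_recursion (f := fun a n => ShZ 𝕜 ((m : ℤ) + n - a) a)
    (g := fun a n => vandermondeSum 𝕜 m n a)
    (fun a n x y => x + y * ι 𝕜 (shift a (β (m + n - a) 1)))
    (fun n => by
      simp [vandermondeSum_zero_right, ShZ_zero_right 𝕜 (by positivity : (0 : ℤ) ≤ m + n)])
    (fun a => by simp [vandermondeSum_zero_left]) lhs_succ_succ
    (fun a n => vandermondeSum_succ_succ 𝕜 m n a)
  exact congrFun (congrFun hpascal a) n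

end BraidPaper
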